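/- arXiv:1608.06415 — 6 statements merged into one kernel-verified Lean document; each statement's English description precedes it below -/
import Mathlib

section
/- Let k ≥ 2 and ε ∈ (0,1] be rational, let N' ≤ N, and define a_i = ε·k^{−x_i} where x_i comes from the bisection process with τ_0 = 2^{N+2}, ρ_0 = 2^{N+3}. Then every a_i lies in the open interval (ε·k^{−2^{N+3}}, ε·k^{−2^{N+2}}), and for any index i_1 at which the first update (C_1) was chosen and any index i_2 at which the second update (C_2) was chosen, a_{i_2}/a_{i_1} ≥ k^4 > k. -/
/-- The bisection process: `τ_0 = 2^{N+2}`, `ρ_0 = 2^{N+3}`, and at step `i ≥ 1`,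
`x_i = (τ_{i−1}+ρ_{i−1})/2`; if condition `C_1` holds at step `i` (`c i = true`) then
`(τ_i,ρ_i) = (τ_{i−1}, x_i)`, and if `C_2` holds (`c i = false`) then `(τ_i,ρ_i) = (x_i, ρ_{i−1})`. -/
def tauRho (N : ℕ) (c : ℕ → Bool) : ℕ → ℚ × ℚ
  | 0 => ((2 : ℚ) ^ (N + 2), (2 : ℚ) ^ (N + 3))
  | i + 1 =>
      let p := tauRho N c i
      let x := (p.1 + p.2) / 2
      if c (i + 1) then (p.1, x) else (x, p.2)

/-- `x_i = (τ_{i−1}+ρ_{i−1})/2`. -/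
def xval (N : ℕ) (c : ℕ → Bool) (i : ℕ) : ℚ :=
  ((tauRho N c (i - 1)).1 + (tauRho N c (i - 1)).2) / 2

/-- Item sizes of procedure SMALL: `a_i = ε·k^{−x_i}` (real power). -/
noncomputable def aval (N : ℕ) (c : ℕ → Bool) (k : ℕ) (ε : ℚ) (i : ℕ) : ℝ :=
  (ε : ℝ) * (k : ℝ) ^ (-((xval N c i : ℚ) : ℝ))

lemma gap_eq (N : ℕ) (c : ℕ → Bool) (i : ℕ) :
    (tauRho N c i).2 - (tauRho N c i).1 = 2 ^ (N + 2) / 2 ^ i := by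
  induction i with
  | zero => simp [tauRho]; ring
  | succ i ih =>
    simp only [tauRho]
    split <;> simp only <;>
    · rw [pow_succ 2 i, ← div_div, ← ih]
      ring

lemma gap_pos (N : ℕ) (c : ℕ → Bool) (i : ℕ) :
    (tauRho N c i).1 < (tauRho N c i).2 := by
  have h := gap_eq N c i
  have : (0:ℚ) < 2 ^ (N + 2) / 2 ^ i := by positivity
  linarith

lemma mono (N : ℕ) (c : ℕ → Bool) : ∀ i j : ℕ, i ≤ j →
    (tauRho N c i).1 ≤ (tauRho N c j).1 ∧ (tauRho N c j).2 ≤ (tauRho N c i).2 := by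
  intro i j hij
  induction j with
  | zero => simp_all
  | succ j ih =>
    rcases Nat.lt_or_ge i (j+1) with h | h
    · have hij' := ih (Nat.lt_succ_iff.mp h)
      have hg := gap_pos N c j
      constructor
      · refine le_trans hij'.1 ?_
        simp only [tauRho]; split <;> simp only <;> linarith
      · refine le_trans ?_ hij'.2
        simp only [tauRho]; split <;> simp only <;> linarith
    · have : i = j + 1 := le_antisymm hij h
      subst this; exact ⟨le_refl _, le_refl _⟩

lemma xval_bounds (N : ℕ) (c : ℕ → Bool) (i : ℕ) (hi : 1 ≤ i) :
    (2:ℚ) ^ (N + 2) < xval N c i ∧ xval N c i < 2 ^ (N + 3) := by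
  obtain ⟨m, rfl⟩ := Nat.exists_eq_add_of_le hi
  have hm : 1 + m - 1 = m := by omega
  have hfix := mono N c 0 m (Nat.zero_le m)
  have hg := gap_pos N c m
  have h0 : (tauRho N c 0).1 = 2 ^ (N + 2) := rfl
  have h1 : (tauRho N c 0).2 = 2 ^ (N + 3) := rfl
  rw [h0, h1] at hfix
  unfold xval
  rw [hm]
  constructor <;> [nlinarith [hfix.1]; nlinarith [hfix.2]]

lemma rho_eq_xval (N : ℕ) (c : ℕ → Bool) (i : ℕ) (hi : 1 ≤ i) (hc : c i = true) :
    (tauRho N c i).2 = xval N c i := by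
  obtain ⟨m, rfl⟩ := Nat.exists_eq_add_of_le hi
  have hm : 1 + m - 1 = m := by omega
  unfold xval
  rw [hm]
  have : 1 + m = m + 1 := by omega
  rw [this] at hc ⊢
  simp [tauRho, hc]

lemma tau_eq_xval (N : ℕ) (c : ℕ → Bool) (i : ℕ) (hi : 1 ≤ i) (hc : c i = false) :
    (tauRho N c i).1 = xval N c i := by
  obtain ⟨m, rfl⟩ := Nat.exists_eq_add_of_le hi
  have hm : 1 + m - 1 = m := by omega
  unfold xval
  rw [hm]
  have : 1 + m = m + 1 := by omega
  rw [this] at hc ⊢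
  simp [tauRho, hc]

/-- Every `a_i` lies in `(ε·k^{−2^{N+3}}, ε·k^{−2^{N+2}})`, and for any index `i₁` at which
`C_1` was chosen and `i₂` at which `C_2` was chosen, `a_{i₂}/a_{i₁} ≥ k⁴ > k`. -/
theorem stmt3 (N N' : ℕ) (hN'pos : 1 ≤ N') (hN' : N' ≤ N) (c : ℕ → Bool)
    (k : ℕ) (hk : 2 ≤ k) (ε : ℚ) (hε0 : 0 < ε) (hε1 : ε ≤ 1) :
    (∀ i : ℕ, 1 ≤ i → i ≤ N' →
      (ε : ℝ) * (k : ℝ) ^ (-((2 : ℝ) ^ (N + 3))) < aval N c k ε i ∧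
      aval N c k ε i < (ε : ℝ) * (k : ℝ) ^ (-((2 : ℝ) ^ (N + 2)))) ∧
    (∀ i₁ i₂ : ℕ, 1 ≤ i₁ → i₁ ≤ N' → 1 ≤ i₂ → i₂ ≤ N' →
      c i₁ = true → c i₂ = false →
      aval N c k ε i₂ / aval N c k ε i₁ ≥ (k : ℝ) ^ (4 : ℕ) ∧
      ((k : ℝ) ^ (4 : ℕ) > (k : ℝ))) := by
  have hk1 : (1:ℝ) < (k:ℝ) := by exact_mod_cast Nat.lt_of_lt_of_le one_lt_two hk
  have hk0 : (0:ℝ) < (k:ℝ) := lt_trans one_pos hk1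
  have hε0' : (0:ℝ) < (ε:ℝ) := by exact_mod_cast hε0
  constructor
  · intro i hi1 hi2
    have hb := xval_bounds N c i hi1
    have hb1 : -((2:ℝ) ^ (N + 3)) < -((xval N c i : ℚ) : ℝ) := by
      have : ((xval N c i : ℚ) : ℝ) < ((2:ℚ)^(N+3) : ℚ) := by exact_mod_cast hb.2
      push_cast at this ⊢; linarith
    have hb2 : -((xval N c i : ℚ) : ℝ) < -((2:ℝ) ^ (N + 2)) := by
      have : ((2:ℚ)^(N+2) : ℚ) < ((xval N c i : ℚ) : ℝ) := by exact_mod_cast hb.1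
      push_cast at this ⊢; linarith
    unfold aval
    constructor
    · exact mul_lt_mul_of_pos_left ((Real.rpow_lt_rpow_left_iff hk1).mpr hb1) hε0'
    · exact mul_lt_mul_of_pos_left ((Real.rpow_lt_rpow_left_iff hk1).mpr hb2) hε0'
  · intro i₁ i₂ h11 h12 h21 h22 hc1 hc2
    have hx1 : (tauRho N c N').2 ≤ xval N c i₁ := by
      rw [← rho_eq_xval N c i₁ h11 hc1]
      exact (mono N c i₁ N' h12).2
    have hx2 : xval N c i₂ ≤ (tauRho N c N').1 := by
      rw [← tau_eq_xval N c i₂ h21 hc2]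
      exact (mono N c i₂ N' h22).1
    have hgap : (tauRho N c N').2 - (tauRho N c N').1 = 2 ^ (N + 2) / 2 ^ N' := gap_eq N c N'
    have h4 : (4:ℚ) ≤ 2 ^ (N + 2) / 2 ^ N' := by
      rw [le_div_iff₀ (by positivity)]
      calc (4:ℚ) * 2 ^ N' ≤ 4 * 2 ^ N := by
            have : (2:ℚ) ^ N' ≤ 2 ^ N := pow_le_pow_right₀ (by norm_num) hN'
            linarith
        _ = 2 ^ (N + 2) := by ring
    have hdiff : (4:ℚ) ≤ xval N c i₁ - xval N c i₂ := by linarith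
    have hdiffR : (4:ℝ) ≤ ((xval N c i₁ : ℚ) : ℝ) - ((xval N c i₂ : ℚ) : ℝ) := by
      exact_mod_cast hdiff
    have hratio : aval N c k ε i₂ / aval N c k ε i₁
        = (k:ℝ) ^ (((xval N c i₁ : ℚ) : ℝ) - ((xval N c i₂ : ℚ) : ℝ)) := by
      unfold aval
      rw [mul_div_mul_left _ _ (ne_of_gt hε0'), ← Real.rpow_sub hk0]
      ring_nf
    constructor
    · rw [ge_iff_le, hratio, ← Real.rpow_natCast (k:ℝ) 4]
      apply Real.rpow_le_rpow_left_iff hk1 |>.mpr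
      push_cast; linarith
    · have h2 : (2:ℝ) ≤ (k:ℝ) := by exact_mod_cast hk
      have h3 : (k:ℝ) ^ (3:ℕ) ≥ 8 := by
        have := pow_le_pow_left₀ (by norm_num : (0:ℝ) ≤ 2) h2 3
        norm_num at this; linarith
      have : (k:ℝ) ^ (4:ℕ) = (k:ℝ) ^ (3:ℕ) * (k:ℝ) := by ring
      rw [this]
      nlinarith
end

section
/- Let k ≥ 3 and N > 0 be reals, and let X_k, Y, Z, r be nonnegative reals with Z = X_k + Y, satisfying: (i) (r−1)·N ≥ (k−1)·X_k, (ii) X_k ≥ N − (k−1)·Z, and (iii) Z·(k²−2k+r) ≤ k·N·(r−1). Then r² + r·(k³−k²−2k) − (2k³−4k²+k) ≥ 0, and consequently r ≥ (2k + k² − k³ + √(k⁶ − 2k⁵ − 3k⁴ + 12k³ − 12k² + 4k))/2. -/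
/-- If `(r−1)N ≥ (k−1)X_k`, `X_k ≥ N − (k−1)Z`, and `Z(k²−2k+r) ≤ kN(r−1)`, then
`r² + r(k³−k²−2k) − (2k³−4k²+k) ≥ 0`, and consequently
`r ≥ (2k + k² − k³ + √(k⁶−2k⁵−3k⁴+12k³−12k²+4k))/2`. -/
theorem stmt6 (k : ℝ) (hk : 3 ≤ k) (N Xk Y Z r : ℝ)
    (hNpos : 0 < N) (hXk : 0 ≤ Xk) (hY : 0 ≤ Y) (hr0 : 0 ≤ r)
    (hZ : Z = Xk + Y)
    (h1 : (r - 1) * N ≥ (k - 1) * Xk)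
    (h2 : Xk ≥ N - (k - 1) * Z)
    (h3 : Z * (k ^ 2 - 2 * k + r) ≤ k * N * (r - 1)) :
    r ^ 2 + r * (k ^ 3 - k ^ 2 - 2 * k) - (2 * k ^ 3 - 4 * k ^ 2 + k) ≥ 0 ∧
    r ≥ (2 * k + k ^ 2 - k ^ 3 +
      Real.sqrt (k ^ 6 - 2 * k ^ 5 - 3 * k ^ 4 + 12 * k ^ 3 - 12 * k ^ 2 + 4 * k)) / 2 := by
  have key : r ^ 2 + r * (k ^ 3 - k ^ 2 - 2 * k) - (2 * k ^ 3 - 4 * k ^ 2 + k) ≥ 0 := by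
    rcases le_or_gt k r with hkr | hkr
    · nlinarith [sq_nonneg (k - 1), mul_nonneg (mul_nonneg hr0 hr0) hr0,
        mul_le_mul_of_nonneg_left hkr (by nlinarith : (0:ℝ) ≤ k ^ 3 - k ^ 2 - 2 * k)]
    · have hZ' : (k - 1) ^ 2 * Z ≥ (k - r) * N := by nlinarith
      have hpos : (0:ℝ) ≤ k ^ 2 - 2 * k + r := by nlinarith
      have h4 : (k - r) * N * (k ^ 2 - 2 * k + r) ≤
          (k - 1) ^ 2 * (k * N * (r - 1)) := by
        calc (k - r) * N * (k ^ 2 - 2 * k + r)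
            ≤ (k - 1) ^ 2 * Z * (k ^ 2 - 2 * k + r) :=
              mul_le_mul_of_nonneg_right hZ' hpos
          _ ≤ (k - 1) ^ 2 * (k * N * (r - 1)) := by
              rw [mul_assoc]
              exact mul_le_mul_of_nonneg_left h3 (sq_nonneg _)
      nlinarith [mul_pos hNpos hNpos]
  refine ⟨key, ?_⟩
  set D := k ^ 6 - 2 * k ^ 5 - 3 * k ^ 4 + 12 * k ^ 3 - 12 * k ^ 2 + 4 * k with hD
  have hb : (0:ℝ) ≤ 2 * r + (k ^ 3 - k ^ 2 - 2 * k) := by nlinarith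
  have hsq : D ≤ (2 * r + (k ^ 3 - k ^ 2 - 2 * k)) ^ 2 := by nlinarith
  have hle : Real.sqrt D ≤ 2 * r + (k ^ 3 - k ^ 2 - 2 * k) := by
    calc Real.sqrt D ≤ Real.sqrt ((2 * r + (k ^ 3 - k ^ 2 - 2 * k)) ^ 2) :=
          Real.sqrt_le_sqrt hsq
      _ = 2 * r + (k ^ 3 - k ^ 2 - 2 * k) := Real.sqrt_sq hb
  linarith
end

section
/- For every integer k ≥ 3, the quantity L(k) = (2k + k² − k³ + √(k⁶ − 2k⁵ − 3k⁴ + 12k³ − 12k² + 4k))/2 satisfies L(k) ≥ 2k/(k+1). In particular L(k) → 2 as k → ∞. -/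
open Filter

/-- The lower bound `L(k) = (2k + k² − k³ + √(k⁶−2k⁵−3k⁴+12k³−12k²+4k))/2`. -/
noncomputable def Lbound (k : ℕ) : ℝ :=
  (2 * (k : ℝ) + (k : ℝ) ^ 2 - (k : ℝ) ^ 3 +
    Real.sqrt ((k : ℝ) ^ 6 - 2 * (k : ℝ) ^ 5 - 3 * (k : ℝ) ^ 4 + 12 * (k : ℝ) ^ 3 -
      12 * (k : ℝ) ^ 2 + 4 * (k : ℝ))) / 2

lemma Lbound_lower (k : ℕ) (hk : 3 ≤ k) : Lbound k ≥ 2 * (k : ℝ) / ((k : ℝ) + 1) := by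
  have hx : (3 : ℝ) ≤ (k : ℝ) := by exact_mod_cast hk
  set x : ℝ := (k : ℝ) with hxdef
  have hx1 : (0 : ℝ) < x + 1 := by linarith
  have hq0 : 0 ≤ (x ^ 4 - 3 * x ^ 2 + 2 * x) / (x + 1) := by
    apply div_nonneg _ hx1.le
    nlinarith [mul_nonneg (sq_nonneg x) (show (0:ℝ) ≤ x ^ 2 - 3 by nlinarith)]
  have hsqrt : (x ^ 4 - 3 * x ^ 2 + 2 * x) / (x + 1) ≤
      Real.sqrt (x ^ 6 - 2 * x ^ 5 - 3 * x ^ 4 + 12 * x ^ 3 - 12 * x ^ 2 + 4 * x) := by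
    rw [show (x ^ 4 - 3 * x ^ 2 + 2 * x) / (x + 1) =
        Real.sqrt (((x ^ 4 - 3 * x ^ 2 + 2 * x) / (x + 1)) ^ 2) from
      (Real.sqrt_sq hq0).symm]
    apply Real.sqrt_le_sqrt
    rw [div_pow, div_le_iff₀ (by positivity)]
    nlinarith [sq_nonneg (x - 1), sq_nonneg x, mul_pos (mul_pos hx1 hx1) (show (0:ℝ) < x by linarith)]
  have key : Lbound k ≥ (2 * x + x ^ 2 - x ^ 3 + (x ^ 4 - 3 * x ^ 2 + 2 * x) / (x + 1)) / 2 := by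
    unfold Lbound
    rw [← hxdef]
    linarith
  have heq : (2 * x + x ^ 2 - x ^ 3 + (x ^ 4 - 3 * x ^ 2 + 2 * x) / (x + 1)) / 2
      = 2 * x / (x + 1) := by
    field_simp
    ring
  linarith [key, heq ▸ key]

lemma Lbound_upper (k : ℕ) (hk : 3 ≤ k) : Lbound k ≤ 2 := by
  have hx : (3 : ℝ) ≤ (k : ℝ) := by exact_mod_cast hk
  set x : ℝ := (k : ℝ) with hxdef
  have hpos : 0 ≤ x ^ 3 - x ^ 2 - 2 * x + 4 := by nlinarith
  have hsqrt : Real.sqrt (x ^ 6 - 2 * x ^ 5 - 3 * x ^ 4 + 12 * x ^ 3 - 12 * x ^ 2 + 4 * x)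
      ≤ x ^ 3 - x ^ 2 - 2 * x + 4 := by
    rw [show x ^ 3 - x ^ 2 - 2 * x + 4 = Real.sqrt ((x ^ 3 - x ^ 2 - 2 * x + 4) ^ 2) from
      (Real.sqrt_sq hpos).symm]
    apply Real.sqrt_le_sqrt
    nlinarith [sq_nonneg (2 * x - 5)]
  unfold Lbound
  rw [← hxdef]
  linarith

/-- For every integer `k ≥ 3`, `L(k) ≥ 2k/(k+1)`; in particular `L(k) → 2` as `k → ∞`. -/
theorem stmt7 :
    (∀ k : ℕ, 3 ≤ k → Lbound k ≥ 2 * (k : ℝ) / ((k : ℝ) + 1)) ∧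
    Tendsto Lbound atTop (nhds 2) := by
  refine ⟨fun k hk => Lbound_lower k hk, ?_⟩
  have hg : Tendsto (fun k : ℕ => 2 - 2 / ((k : ℝ) + 1)) atTop (nhds 2) := by
    have h0 : Tendsto (fun n : ℕ => 1 / ((n : ℝ) + 1)) atTop (nhds 0) := tendsto_one_div_add_atTop_nhds_zero_nat
    have h2 : Tendsto (fun n : ℕ => 2 * (1 / ((n : ℝ) + 1))) atTop (nhds 0) := by
      simpa using h0.const_mul 2
    simpa [mul_one_div, div_eq_mul_inv] using h2.const_sub 2
  refine tendsto_of_tendsto_of_tendsto_of_le_of_le' hg tendsto_const_nhds ?_ ?_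
  · filter_upwards [eventually_ge_atTop 3] with k hk
    have h1 : (0 : ℝ) < (k : ℝ) + 1 := by positivity
    have heq : 2 - 2 / ((k : ℝ) + 1) = 2 * (k : ℝ) / ((k : ℝ) + 1) := by
      field_simp
      ring
    rw [heq]
    exact Lbound_lower k hk
  · filter_upwards [eventually_ge_atTop 3] with k hk
    exact Lbound_upper k hk
end

section
/- (k=2 accounting) Let x, y, y_1, y_2, y_3, z_1, z_2, z_3 be nonnegative reals satisfying z_1 = x/2 + y + y_2 + z_2, y_1 = z_2 + z_3, and z = z_1 + z_2 + z_3, with y ≤ x/4 and x > 0. Then (x + y + z)/(x/2 + y_1 + z_1) − 1 ≥ 3/7, i.e., (x+y+z)/(x/2 + y_1 + z_1) ≥ 10/7. -/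
/-- `k = 2` accounting: with `z₁ = x/2 + y + y₂ + z₂`, `y₁ = z₂ + z₃`, `z = z₁ + z₂ + z₃`,
`y = y₁ + y₂ + y₃`, `y ≤ x/4` and `x > 0`, one has
`(x+y+z)/(x/2 + y₁ + z₁) − 1 ≥ 3/7`, i.e. `(x+y+z)/(x/2 + y₁ + z₁) ≥ 10/7`. -/
theorem stmt12 (x y z y₁ y₂ y₃ z₁ z₂ z₃ : ℝ)
    (hx : 0 < x) (hy : 0 ≤ y) (hy₁ : 0 ≤ y₁) (hy₂ : 0 ≤ y₂) (hy₃ : 0 ≤ y₃)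
    (hz₁ : 0 ≤ z₁) (hz₂ : 0 ≤ z₂) (hz₃ : 0 ≤ z₃)
    (hz₁eq : z₁ = x / 2 + y + y₂ + z₂) (hy₁eq : y₁ = z₂ + z₃)
    (hzeq : z = z₁ + z₂ + z₃) (hyeq : y = y₁ + y₂ + y₃) (hyx : y ≤ x / 4) :
    (x + y + z) / (x / 2 + y₁ + z₁) - 1 ≥ 3 / 7 ∧
    (x + y + z) / (x / 2 + y₁ + z₁) ≥ 10 / 7 := by
  have hD : 0 < x / 2 + y₁ + z₁ := by linarith
  have hz₂y : z₂ ≤ y := by nlinarith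
  have key : (x + y + z) / (x / 2 + y₁ + z₁) ≥ 10 / 7 := by
    rw [ge_iff_le, le_div_iff₀ hD]
    nlinarith
  exact ⟨by linarith, key⟩
end

section
/- (k=3 LP bound) The minimum value of r over all nonnegative reals X_1, X_2, X_3, d, N with N = X_1 + 2X_2 + 3X_3 > 0, d ≤ X_1 + X_2, subject to the constraints (a) 3(X_1+X_2+X_3) ≤ r·N, (b) X_1 + 2X_2 + 5X_3 ≤ r·(X_1 + 2X_2 + 3X_3), (c) 6X_1 + 9X_2 + 12X_3 ≤ r·(2X_1 + 5X_2 + 8X_3), (d) 5X_1 + 10X_2 + 15X_3 + 6d ≤ r·(3X_1 + 6X_2 + 9X_3 + 6d), is strictly greater than 1.556. -/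
/-- `k = 3` LP bound: any `r > 0` that is feasible for the mathematical program, i.e., for
which there exist nonnegative `X₁, X₂, X₃, d` with `N = X₁ + 2X₂ + 3X₃ > 0`, `d ≤ X₁ + X₂`,
satisfying constraints (a)–(d), is strictly greater than `1.556`. -/
theorem stmt14 (r : ℝ) (hr : 0 < r)
    (hfeas : ∃ X₁ X₂ X₃ d N : ℝ, 0 ≤ X₁ ∧ 0 ≤ X₂ ∧ 0 ≤ X₃ ∧ 0 ≤ d ∧
      N = X₁ + 2 * X₂ + 3 * X₃ ∧ 0 < N ∧ d ≤ X₁ + X₂ ∧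
      3 * (X₁ + X₂ + X₃) ≤ r * N ∧
      X₁ + 2 * X₂ + 5 * X₃ ≤ r * (X₁ + 2 * X₂ + 3 * X₃) ∧
      6 * X₁ + 9 * X₂ + 12 * X₃ ≤ r * (2 * X₁ + 5 * X₂ + 8 * X₃) ∧
      5 * X₁ + 10 * X₂ + 15 * X₃ + 6 * d ≤ r * (3 * X₁ + 6 * X₂ + 9 * X₃ + 6 * d)) :
    r > 1.556 := by
  obtain ⟨X₁, X₂, X₃, d, N, h1, h2, h3, h4, hN, hNpos, hd, ha, hb, hc, hdc⟩ := hfeas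
  by_contra h
  push_neg at h
  have q1 : (0:ℝ) ≤ 2 * X₁ + 5 * X₂ + 8 * X₃ := by linarith
  have q2 : (0:ℝ) ≤ 3 * X₁ + 6 * X₂ + 9 * X₃ + 6 * d := by linarith
  have hc' : 6 * X₁ + 9 * X₂ + 12 * X₃ ≤ 1.556 * (2 * X₁ + 5 * X₂ + 8 * X₃) :=
    hc.trans (mul_le_mul_of_nonneg_right h q1)
  have hdc' : 5 * X₁ + 10 * X₂ + 15 * X₃ + 6 * d ≤
      1.556 * (3 * X₁ + 6 * X₂ + 9 * X₃ + 6 * d) :=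
    hdc.trans (mul_le_mul_of_nonneg_right h q2)
  subst hN
  linarith
end

section
/- (k ≥ 5 case analysis) Let k = 5. The minimum over both mathematical programs is greater than 1.697: for every r < 1.697 there is no nonnegative solution (X_4, X_5, Y', Y, N, λ_1, λ_2, λ_3) with N > 0, Y = X_4 + Y', N ≤ 5X_5 + 4X_4 + 3Y', λ_1 ≥ N/4, λ_2 ≥ (N − X_5 − Y)/4, λ_3 ≥ 2(Y' + X_4 + X_5)/3, satisfying both competitiveness constraints X_5 + λ_1 ≤ r(N+λ_1)/5 and X_5 + Y + λ_2 ≤ r(N+λ_2)/5, together with either [λ_3 ≤ X_4 + 2Y'] or [λ_3 ≥ X_4 + 2Y' and X_5 + X_4/2 + λ_2 + λ_3/2 ≤ r(N + λ_2 + λ_3)/5]. -/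
/-- `k = 5` case analysis: for every `r < 1.697` there is no nonnegative solution
`(X₄, X₅, Y', Y, N, λ₁, λ₂, λ₃)` with `N > 0` satisfying the constraints of both
mathematical programs (either case). -/
theorem stmt17 (r X₄ X₅ Y' Y N lam₁ lam₂ lam₃ : ℝ)
    (hr : r < 1.697)
    (hX₄ : 0 ≤ X₄) (hX₅ : 0 ≤ X₅) (hY' : 0 ≤ Y') (hY : 0 ≤ Y)
    (hlam₁ : 0 ≤ lam₁) (hlam₂ : 0 ≤ lam₂) (hlam₃ : 0 ≤ lam₃)
    (hN : 0 < N)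
    (hYeq : Y = X₄ + Y')
    (hcount : N ≤ 5 * X₅ + 4 * X₄ + 3 * Y')
    (h1 : lam₁ ≥ N / 4)
    (h2 : lam₂ ≥ (N - X₅ - Y) / 4)
    (h3 : lam₃ ≥ 2 * (Y' + X₄ + X₅) / 3)
    (hI₁ : X₅ + lam₁ ≤ r * (N + lam₁) / 5)
    (hI₂ : X₅ + Y + lam₂ ≤ r * (N + lam₂) / 5) :
    ¬ (lam₃ ≤ X₄ + 2 * Y' ∨
       (lam₃ ≥ X₄ + 2 * Y' ∧
        X₅ + X₄ / 2 + lam₂ + lam₃ / 2 ≤ r * (N + lam₂ + lam₃) / 5)) := by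
  rintro (hc | ⟨hc, hI₃⟩)
  · -- Case 1: lam₃ ≤ X₄ + 2Y'
    have hp1 : (0:ℝ) < N + lam₁ := by linarith
    have hI₁' : X₅ + lam₁ ≤ 1.697 * (N + lam₁) / 5 := by nlinarith
    have hp2 : (0:ℝ) < N + lam₂ := by linarith
    have hI₂' : X₅ + Y + lam₂ ≤ 1.697 * (N + lam₂) / 5 := by nlinarith
    linarith
  · -- Case 2
    have hp2 : (0:ℝ) < N + lam₂ := by linarith
    have hI₂' : X₅ + Y + lam₂ ≤ 1.697 * (N + lam₂) / 5 := by nlinarith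
    have hp3 : (0:ℝ) < N + lam₂ + lam₃ := by linarith
    have hI₃' : X₅ + X₄ / 2 + lam₂ + lam₃ / 2 ≤ 1.697 * (N + lam₂ + lam₃) / 5 := by
      nlinarith
    have hp1 : (0:ℝ) < N + lam₁ := by linarith
    have hI₁' : X₅ + lam₁ ≤ 1.697 * (N + lam₁) / 5 := by nlinarith
    linarith
end
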